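/- Conversely, if W ∈ ℝ^{2ⁿ} is a nonzero vector with all entries in {0,1} satisfying W·K^{[n]} = W, then the set C = {v ∈ F₂ⁿ : W[v] = 1} is a self-dual binary code of length n. -/

import Mathlib

open Matrix Finset

/-!
Write `S = {v | W v = 1}`. Unfolding `K^{[n]}`, the equation `W·K^{[n]} = W` says
`∑_{u ∈ S} (-1)^{u·v} = 2^{n/2} · W v` for every `v`. At `v = 0` the left side is `|S| > 0`,
so `0 ∈ S` and `|S| = 2^{n/2}`. For general `v` the left side is at most `|S|`, with equality
iff `v ⊥ S`; hence `v ∈ S ↔ v ⊥ S`, i.e. `S = S^⊥`, which is in particular a subspace.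
-/

noncomputable def Kbit : Matrix (ZMod 2) (ZMod 2) ℝ :=
  fun a b => (1 / Real.sqrt 2) * (if a = 1 ∧ b = 1 then -1 else 1)

noncomputable def Kpow (n : ℕ) : Matrix (Fin n → ZMod 2) (Fin n → ZMod 2) ℝ :=
  fun u v => ∏ i, Kbit (u i) (v i)

def IsSelfDual {n : ℕ} (C : Submodule (ZMod 2) (Fin n → ZMod 2)) : Prop :=
  ∀ u, u ∈ C ↔ ∀ c ∈ C, ∑ i, u i * c i = 0

theorem neg_one_pow_val_add {R : Type*} [Ring R] (a b : ZMod 2) :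
    (-1 : R) ^ (a + b).val = (-1) ^ a.val * (-1) ^ b.val := by
  rw [ZMod.val_add, ← neg_one_pow_eq_pow_mod_two, pow_add]

theorem prod_neg_one_pow_val {R ι : Type*} [CommRing R] (s : Finset ι) (f : ι → ZMod 2) :
    ∏ i ∈ s, (-1 : R) ^ (f i).val = (-1) ^ (∑ i ∈ s, f i).val := by
  classical
  induction s using Finset.induction_on with
  | empty => simp
  | insert j s hj ih => rw [prod_insert hj, sum_insert hj, ih, neg_one_pow_val_add]

theorem neg_one_pow_val_eq_one_iff (a : ZMod 2) : (-1 : ℝ) ^ a.val = 1 ↔ a = 0 := by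
  rw [neg_one_pow_eq_one_iff_even (by norm_num), ← ZMod.natCast_eq_zero_iff_even,
    ZMod.natCast_zmod_val]

theorem Kbit_apply (a b : ZMod 2) : Kbit a b = (Real.sqrt 2)⁻¹ * (-1) ^ (a * b).val := by
  obtain rfl | rfl : a = 0 ∨ a = 1 := by decide +revert
  all_goals obtain rfl | rfl : b = 0 ∨ b = 1 := by decide +revert
  all_goals simp [Kbit, ZMod.val_one]

theorem Kpow_apply (n : ℕ) (u v : Fin n → ZMod 2) :
    Kpow n u v = (Real.sqrt 2)⁻¹ ^ n * (-1) ^ (u ⬝ᵥ v).val := by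
  simp only [Kpow, Kbit_apply, prod_mul_distrib, prod_const, card_univ, Fintype.card_fin,
    prod_neg_one_pow_val, dotProduct]

theorem sum_mul_neg_one_pow_dotProduct_of_vecMul_Kpow {n : ℕ} {W : (Fin n → ZMod 2) → ℝ}
    (hW : vecMul W (Kpow n) = W) (v : Fin n → ZMod 2) :
    ∑ u, W u * (-1) ^ (u ⬝ᵥ v).val = Real.sqrt 2 ^ n * W v := by
  have hv := congrFun hW v
  simp only [vecMul, dotProduct, Kpow_apply, mul_left_comm (W _), ← mul_sum] at hv ⊢
  rw [← hv, ← mul_assoc, ← mul_pow, mul_inv_cancel₀ (by positivity), one_pow, one_mul]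

-- `∑ u, W u * χ u v ≤ ∑ u, W u`, with equality iff `χ · v = 1` on the support of `W`;
-- the case `v = v₀` identifies `c` with `∑ u, W u`.
theorem eq_one_iff_forall_eq_one_of_sum_mul_eq {α : Type*} [Fintype α] {W : α → ℝ}
    {χ : α → α → ℝ} {c : ℝ} {v₀ : α} (hne : W ≠ 0) (h01 : ∀ v, W v = 0 ∨ W v = 1)
    (hχ : ∀ u v, χ u v ≤ 1) (hχ₀ : ∀ u, χ u v₀ = 1)
    (hsum : ∀ v, ∑ u, W u * χ u v = c * W v) (v : α) :
    W v = 1 ↔ ∀ u, W u = 1 → χ u v = 1 := by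
  have hnonneg : ∀ u, 0 ≤ W u := fun u => by rcases h01 u with h | h <;> simp [h]
  have hterm : ∀ u, W u * χ u v ≤ W u := fun u =>
    mul_le_of_le_one_right (hnonneg u) (hχ u v)
  have htotal : 0 < ∑ u, W u := by
    obtain ⟨u, hu⟩ := Function.ne_iff.mp hne
    exact sum_pos' (fun u _ => hnonneg u) ⟨u, mem_univ u, (hnonneg u).lt_of_ne' hu⟩
  have hc : c = ∑ u, W u := by
    have h₀ := hsum v₀
    simp only [hχ₀, mul_one] at h₀
    rcases h01 v₀ with h | h
    · rw [h, mul_zero] at h₀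
      exact absurd h₀ htotal.ne'
    · rw [h, mul_one] at h₀
      exact h₀.symm
  calc W v = 1 ↔ ∑ u, W u * χ u v = ∑ u, W u := by
        rw [hsum, hc]
        rcases h01 v with h | h <;> simp [h, htotal.ne]
    _ ↔ ∀ u, W u * χ u v = W u := by
        simpa using sum_eq_sum_iff_of_le fun u (_ : u ∈ univ) => hterm u
    _ ↔ ∀ u, W u = 1 → χ u v = 1 := by
        refine forall_congr' fun u => ?_
        rcases h01 u with h | h <;> simp [h]

def dotOrthogonal {R ι : Type*} [CommSemiring R] [Fintype ι] (S : Set (ι → R)) :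
    Submodule R (ι → R) :=
  ⨅ u ∈ S, LinearMap.ker (dotProductBilin R R u)

theorem mem_dotOrthogonal {R ι : Type*} [CommSemiring R] [Fintype ι] {S : Set (ι → R)}
    {v : ι → R} : v ∈ dotOrthogonal S ↔ ∀ u ∈ S, u ⬝ᵥ v = 0 := by
  simp [dotOrthogonal]

/-- If W ∈ ℝ^{2ⁿ} is a nonzero vector with entries in {0,1} satisfying
W·K^{[n]} = W, then {v ∈ F₂ⁿ : W v = 1} is a self-dual binary code of length n. -/
theorem stmt_8 (n : ℕ) (W : (Fin n → ZMod 2) → ℝ) (hne : W ≠ 0)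
    (h01 : ∀ v, W v = 0 ∨ W v = 1) (hW : vecMul W (Kpow n) = W) :
    ∃ C : Submodule (ZMod 2) (Fin n → ZMod 2),
      IsSelfDual C ∧ ∀ v, v ∈ C ↔ W v = 1 := by
  have hsign_le : ∀ u v : Fin n → ZMod 2, (-1 : ℝ) ^ (u ⬝ᵥ v).val ≤ 1 := fun _ _ =>
    (le_abs_self _).trans (abs_neg_one_pow _).le
  have hsupp : ∀ v, W v = 1 ↔ ∀ u, W u = 1 → u ⬝ᵥ v = 0 := fun v => by
    simpa only [neg_one_pow_val_eq_one_iff] using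
      eq_one_iff_forall_eq_one_of_sum_mul_eq (v₀ := 0) hne h01 hsign_le
        (fun u => by simp [dotProduct_zero u])
        (sum_mul_neg_one_pow_dotProduct_of_vecMul_Kpow hW) v
  have hC : ∀ v, v ∈ dotOrthogonal {u | W u = 1} ↔ W v = 1 := fun v => by
    rw [mem_dotOrthogonal, hsupp]; rfl
  refine ⟨dotOrthogonal {u | W u = 1}, fun u => ?_, hC⟩
  simp only [hC, hsupp u]
  exact forall_congr' fun c => imp_congr_right fun _ => by rw [dotProduct_comm]; rfl
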